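/- Let p ≥ 1, d ≥ 1, K ≥ 2, and let μ_1, …, μ_K be probability measures on ℝ^d with finite p-th moments, with each θ ↦ W_p^p(θ♯μ_i, θ♯μ_j) measurable and σ-integrable on S^{d−1}. Then SMW_p^p(μ_1, …, μ_K; c) ≥ max_{1≤i,j≤K} SW_p^p(μ_i, μ_j), i.e., the sliced multi-marginal Wasserstein cost with the maximal ground metric dominates the largest pairwise sliced Wasserstein cost among the marginals. -/

import Mathlib

open MeasureTheory Metric Real

noncomputable section

/-- `ℝ^d`. -/
abbrev Rd (d : ℕ) := EuclideanSpace ℝ (Fin d)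

/-- The uniform probability measure `σ` on the unit sphere `S^{d-1} ⊂ ℝ^d`,
obtained by normalizing the surface measure coming from the Lebesgue measure. -/
noncomputable def uniformSphere (d : ℕ) :
    Measure (sphere (0 : Rd d) 1) :=
  ((volume : Measure (Rd d)).toSphere Set.univ)⁻¹ • (volume : Measure (Rd d)).toSphere

/-- A measure on `ℝ^d` has finite `p`-th moment. -/
def FiniteMoment {d : ℕ} (p : ℝ) (μ : Measure (Rd d)) : Prop :=
  Integrable (fun x => ‖x‖ ^ p) μ

/-- A measure on `ℝ` has finite `p`-th moment. -/
def FiniteMoment1 (p : ℝ) (ν : Measure ℝ) : Prop :=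
  Integrable (fun x => |x| ^ p) ν

/-- Pushforward `θ♯μ` of `μ` under `x ↦ ⟪θ, x⟫`. -/
def proj {d : ℕ} (θ : sphere (0 : Rd d) 1) (μ : Measure (Rd d)) : Measure ℝ :=
  μ.map (fun x => inner ℝ (θ : Rd d) x)

/-- The set of couplings of two measures on `ℝ`. -/
def Coupling (ν₁ ν₂ : Measure ℝ) : Set (Measure (ℝ × ℝ)) :=
  {γ | IsProbabilityMeasure γ ∧ γ.map Prod.fst = ν₁ ∧ γ.map Prod.snd = ν₂}

/-- One-dimensional `p`-Wasserstein cost `W_p^p`. -/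
def Wpp (p : ℝ) (ν₁ ν₂ : Measure ℝ) : ℝ :=
  sInf ((fun γ : Measure (ℝ × ℝ) => ∫ q, |q.1 - q.2| ^ p ∂γ) '' Coupling ν₁ ν₂)

/-- Sliced `p`-Wasserstein cost `SW_p^p`. -/
def SWpp {d : ℕ} (p : ℝ) (μ₁ μ₂ : Measure (Rd d)) : ℝ :=
  ∫ θ, Wpp p (proj θ μ₁) (proj θ μ₂) ∂(uniformSphere d)

/-- The set of multi-marginal couplings of `K` measures on `ℝ^d`. -/
def MCoupling {d K : ℕ} (μs : Fin K → Measure (Rd d)) : Set (Measure (Fin K → Rd d)) :=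
  {pl | IsProbabilityMeasure pl ∧ ∀ k, pl.map (fun x => x k) = μs k}

/-- The inner multi-marginal transport cost along direction `θ`, with the maximal
ground metric `c(t₁,…,t_K) = max_{i,j} |t_i - t_j|`. -/
def SMWtheta {d K : ℕ} (p : ℝ) (μs : Fin K → Measure (Rd d))
    (θ : sphere (0 : Rd d) 1) : ℝ :=
  sInf ((fun pl : Measure (Fin K → Rd d) =>
      ∫ x, (⨆ i, ⨆ j, |inner ℝ (θ : Rd d) (x i) - inner ℝ (θ : Rd d) (x j)|) ^ p ∂pl)
    '' MCoupling μs)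

/-- Sliced multi-marginal Wasserstein cost `SMW_p^p` with the maximal ground metric. -/
def SMWpp {d K : ℕ} (p : ℝ) (μs : Fin K → Measure (Rd d)) : ℝ :=
  ∫ θ, SMWtheta p μs θ ∂(uniformSphere d)

/-!
A multi-marginal coupling `π` of `μ₁, …, μ_K` pushed forward by `x ↦ (⟪θ, x_i⟫, ⟪θ, x_j⟫)`
couples `θ♯μ_i` and `θ♯μ_j`, and its cost `|t_i - t_j|^p` is at most the maximal ground cost.
Hence `W_p^p(θ♯μ_i, θ♯μ_j)` is at most the inner multi-marginal cost for every direction `θ`,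
and integrating over `σ` gives the claim. The analytic point is that the inner cost is
`σ`-integrable: as a function of `θ` it is an infimum of functions that are continuous by
dominated convergence (with the bound `2^p ‖x‖^p`, integrable by the moment assumption), hence
upper semicontinuous and measurable, and it is bounded by its value at the product coupling.
-/

open scoped RealInnerProductSpace

section MaxSpread

variable {ι : Type*}

def maxSpread (a : ι → ℝ) : ℝ := ⨆ i, ⨆ j, |a i - a j|

theorem maxSpread_nonneg (a : ι → ℝ) : 0 ≤ maxSpread a :=
  Real.iSup_nonneg fun _ => Real.iSup_nonneg fun _ => abs_nonneg _

theorem abs_sub_le_maxSpread [Finite ι] (a : ι → ℝ) (i j : ι) : |a i - a j| ≤ maxSpread a :=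
  (le_ciSup (f := fun j => |a i - a j|) (Set.finite_range _).bddAbove j).trans
    (le_ciSup (f := fun i => ⨆ j, |a i - a j|) (Set.finite_range _).bddAbove i)

theorem maxSpread_le_add_two_mul_dist [Fintype ι] (a b : ι → ℝ) :
    maxSpread a ≤ maxSpread b + 2 * dist a b := by
  have hbound : 0 ≤ maxSpread b + 2 * dist a b := by
    have := maxSpread_nonneg b; positivity
  refine Real.iSup_le (fun i => Real.iSup_le (fun j => ?_) hbound) hbound
  have hi : |a i - b i| ≤ dist a b := by simpa [Real.dist_eq] using dist_le_pi_dist a b i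
  have hj : |a j - b j| ≤ dist a b := by simpa [Real.dist_eq] using dist_le_pi_dist a b j
  have hb := abs_sub_le_maxSpread b i j
  rw [abs_le] at hi hj hb ⊢
  constructor <;> linarith

theorem lipschitzWith_maxSpread [Fintype ι] : LipschitzWith 2 (maxSpread : (ι → ℝ) → ℝ) :=
  LipschitzWith.of_le_add_mul 2 maxSpread_le_add_two_mul_dist

theorem maxSpread_le_two_mul_norm [Fintype ι] (a : ι → ℝ) : maxSpread a ≤ 2 * ‖a‖ := by
  simpa [maxSpread] using maxSpread_le_add_two_mul_dist a 0

end MaxSpread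

section SpreadCost

variable {ι E : Type*} [NormedAddCommGroup E] [InnerProductSpace ℝ E]

def spreadCost (p : ℝ) (θ : E) (x : ι → E) : ℝ := maxSpread (fun k => ⟪θ, x k⟫) ^ p

theorem spreadCost_nonneg (p : ℝ) (θ : E) (x : ι → E) : 0 ≤ spreadCost p θ x :=
  rpow_nonneg (maxSpread_nonneg _) p

theorem abs_sub_inner_rpow_le_spreadCost [Finite ι] {p : ℝ} (hp : 0 ≤ p) (θ : E) (x : ι → E)
    (i j : ι) :
    |⟪θ, x i⟫ - ⟪θ, x j⟫| ^ p ≤ spreadCost p θ x :=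
  rpow_le_rpow (abs_nonneg _) (abs_sub_le_maxSpread (fun k => ⟪θ, x k⟫) i j) hp

theorem norm_inner_pi_le [Fintype ι] (θ : E) (x : ι → E) : ‖fun k => ⟪θ, x k⟫‖ ≤ ‖θ‖ * ‖x‖ :=
  (pi_norm_le_iff_of_nonneg (by positivity)).2 fun k =>
    (norm_inner_le_norm θ (x k)).trans (by gcongr; exact norm_le_pi_norm x k)

theorem spreadCost_le [Fintype ι] {p : ℝ} (hp : 0 ≤ p) {θ : E} (hθ : ‖θ‖ ≤ 1) (x : ι → E) :
    spreadCost p θ x ≤ 2 ^ p * ‖x‖ ^ p := by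
  rw [← mul_rpow zero_le_two (norm_nonneg x)]
  refine rpow_le_rpow (maxSpread_nonneg _) ((maxSpread_le_two_mul_norm _).trans ?_) hp
  gcongr
  exact (norm_inner_pi_le θ x).trans (mul_le_of_le_one_left (norm_nonneg x) hθ)

theorem Continuous.spreadCost [Fintype ι] {X : Type*} [TopologicalSpace X] {p : ℝ}
    (hp : 0 ≤ p) {θ : X → E} {x : X → ι → E}
    (hθ : Continuous θ) (hx : Continuous x) :
    Continuous fun t => spreadCost p (θ t) (x t) :=
  (lipschitzWith_maxSpread.continuous.comp (by fun_prop)).rpow_const fun _ => Or.inr hp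

end SpreadCost

section Couplings

variable {d K : ℕ} {p : ℝ}

theorem integral_abs_sub_rpow_nonneg (p : ℝ) (γ : Measure (ℝ × ℝ)) :
    0 ≤ ∫ q, |q.1 - q.2| ^ p ∂γ :=
  integral_nonneg fun _ => rpow_nonneg (abs_nonneg _) p

theorem wpp_nonneg (p : ℝ) (ν₁ ν₂ : Measure ℝ) : 0 ≤ Wpp p ν₁ ν₂ :=
  Real.sInf_nonneg <| Set.forall_mem_image.2 fun γ _ => integral_abs_sub_rpow_nonneg p γ

theorem wpp_le_integral {ν₁ ν₂ : Measure ℝ} {γ : Measure (ℝ × ℝ)} (hγ : γ ∈ Coupling ν₁ ν₂) :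
    Wpp p ν₁ ν₂ ≤ ∫ q, |q.1 - q.2| ^ p ∂γ :=
  csInf_le ⟨0, Set.forall_mem_image.2 fun γ _ => integral_abs_sub_rpow_nonneg p γ⟩
    (Set.mem_image_of_mem _ hγ)

theorem finiteMoment_iff_memLp (hp : 0 < p) {μ : Measure (Rd d)} :
    FiniteMoment p μ ↔ MemLp id (ENNReal.ofReal p) μ := by
  rw [FiniteMoment, ← integrable_norm_rpow_iff aestronglyMeasurable_id (by simpa using hp)
    ENNReal.ofReal_ne_top, ENNReal.toReal_ofReal hp.le]
  rfl

theorem pi_mem_mCoupling (μs : Fin K → Measure (Rd d)) [∀ k, IsProbabilityMeasure (μs k)] :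
    Measure.pi μs ∈ MCoupling μs :=
  ⟨inferInstance, fun k => (measurePreserving_eval μs k).map_eq⟩

theorem integrable_norm_rpow_of_mem_mCoupling (hp : 0 < p) {μs : Fin K → Measure (Rd d)}
    (hμsm : ∀ k, FiniteMoment p (μs k)) {pl : Measure (Fin K → Rd d)} (hpl : pl ∈ MCoupling μs) :
    Integrable (fun x => ‖x‖ ^ p) pl := by
  have hLp : MemLp id (ENNReal.ofReal p) pl := memLp_pi_iff.2 fun k => by
    have hk := (finiteMoment_iff_memLp hp).1 (hμsm k)
    rw [← hpl.2 k, memLp_map_measure_iff aestronglyMeasurable_id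
      (measurable_pi_apply k : Measurable fun x : Fin K → Rd d => x k).aemeasurable] at hk
    exact hk
  simpa [ENNReal.toReal_ofReal hp.le] using
    (integrable_norm_rpow_iff hLp.1 (by simpa using hp) ENNReal.ofReal_ne_top).2 hLp

theorem integrable_spreadCost_of_mem_mCoupling (hp : 0 < p) {μs : Fin K → Measure (Rd d)}
    (hμsm : ∀ k, FiniteMoment p (μs k)) {pl : Measure (Fin K → Rd d)} (hpl : pl ∈ MCoupling μs)
    {θ : Rd d} (hθ : ‖θ‖ ≤ 1) :
    Integrable (spreadCost p θ) pl :=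
  ((integrable_norm_rpow_of_mem_mCoupling hp hμsm hpl).const_mul (2 ^ p)).mono'
    (continuous_const.spreadCost hp.le continuous_id).aestronglyMeasurable
    (ae_of_all _ fun x => by
      rw [norm_of_nonneg (spreadCost_nonneg p θ x)]
      exact spreadCost_le hp.le hθ x)

theorem map_mem_coupling_proj {μs : Fin K → Measure (Rd d)} {pl : Measure (Fin K → Rd d)}
    (hpl : pl ∈ MCoupling μs) (θ : sphere (0 : Rd d) 1) (i j : Fin K) :
    pl.map (fun x => (⟪(θ : Rd d), x i⟫, ⟪(θ : Rd d), x j⟫)) ∈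
      Coupling (proj θ (μs i)) (proj θ (μs j)) := by
  have := hpl.1
  refine ⟨Measure.isProbabilityMeasure_map (by fun_prop), ?_, ?_⟩
  · rw [Measure.map_map measurable_fst (by fun_prop), proj, ← hpl.2 i,
      Measure.map_map (g := fun y : Rd d => ⟪(θ : Rd d), y⟫) (by fun_prop) (measurable_pi_apply i)]
    rfl
  · rw [Measure.map_map measurable_snd (by fun_prop), proj, ← hpl.2 j,
      Measure.map_map (g := fun y : Rd d => ⟪(θ : Rd d), y⟫) (by fun_prop) (measurable_pi_apply j)]
    rfl

theorem wpp_le_integral_spreadCost (hp : 0 < p) {μs : Fin K → Measure (Rd d)}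
    (hμsm : ∀ k, FiniteMoment p (μs k)) {pl : Measure (Fin K → Rd d)} (hpl : pl ∈ MCoupling μs)
    (θ : sphere (0 : Rd d) 1) (i j : Fin K) :
    Wpp p (proj θ (μs i)) (proj θ (μs j)) ≤ ∫ x, spreadCost p (θ : Rd d) x ∂pl :=
  calc Wpp p (proj θ (μs i)) (proj θ (μs j))
      ≤ ∫ q, |q.1 - q.2| ^ p ∂(pl.map fun x => (⟪(θ : Rd d), x i⟫, ⟪(θ : Rd d), x j⟫)) :=
        wpp_le_integral (map_mem_coupling_proj hpl θ i j)
    _ = ∫ x, |⟪(θ : Rd d), x i⟫ - ⟪(θ : Rd d), x j⟫| ^ p ∂pl :=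
        integral_map (by fun_prop)
          (Continuous.aestronglyMeasurable (by fun_prop (disch := exact hp.le)))
    _ ≤ ∫ x, spreadCost p (θ : Rd d) x ∂pl :=
        integral_mono_of_nonneg (ae_of_all _ fun _ => by positivity)
          (integrable_spreadCost_of_mem_mCoupling hp hμsm hpl (norm_eq_of_mem_sphere θ).le)
          (ae_of_all _ fun x => abs_sub_inner_rpow_le_spreadCost hp.le _ x i j)

end Couplings

section SlicedCost

variable {d K : ℕ} {p : ℝ}

theorem smwTheta_eq_iInf (p : ℝ) (μs : Fin K → Measure (Rd d)) (θ : sphere (0 : Rd d) 1) :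
    SMWtheta p μs θ =
      ⨅ pl : MCoupling μs, ∫ x, spreadCost p (θ : Rd d) x ∂(pl : Measure (Fin K → Rd d)) :=
  sInf_image'

theorem bddBelow_range_integral_spreadCost (p : ℝ) (μs : Fin K → Measure (Rd d)) (θ : Rd d) :
    BddBelow (Set.range fun pl : MCoupling μs =>
      ∫ x, spreadCost p θ x ∂(pl : Measure (Fin K → Rd d))) :=
  ⟨0, Set.forall_mem_range.2 fun _ => integral_nonneg (spreadCost_nonneg p θ)⟩

theorem smwTheta_nonneg (p : ℝ) (μs : Fin K → Measure (Rd d)) (θ : sphere (0 : Rd d) 1) :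
    0 ≤ SMWtheta p μs θ := by
  rw [smwTheta_eq_iInf]
  exact Real.iInf_nonneg fun _ => integral_nonneg (spreadCost_nonneg p _)

theorem smwTheta_le_integral {μs : Fin K → Measure (Rd d)} {pl : Measure (Fin K → Rd d)}
    (hpl : pl ∈ MCoupling μs) (θ : sphere (0 : Rd d) 1) :
    SMWtheta p μs θ ≤ ∫ x, spreadCost p (θ : Rd d) x ∂pl := by
  rw [smwTheta_eq_iInf]
  exact ciInf_le (bddBelow_range_integral_spreadCost p μs θ) ⟨pl, hpl⟩

theorem wpp_le_smwTheta (hp : 0 < p) (μs : Fin K → Measure (Rd d))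
    [∀ k, IsProbabilityMeasure (μs k)] (hμsm : ∀ k, FiniteMoment p (μs k))
    (θ : sphere (0 : Rd d) 1) (i j : Fin K) :
    Wpp p (proj θ (μs i)) (proj θ (μs j)) ≤ SMWtheta p μs θ := by
  have : Nonempty (MCoupling μs) := ⟨⟨_, pi_mem_mCoupling μs⟩⟩
  rw [smwTheta_eq_iInf]
  exact le_ciInf fun pl => wpp_le_integral_spreadCost hp hμsm pl.2 θ i j

theorem continuous_integral_spreadCost (hp : 0 < p) {μs : Fin K → Measure (Rd d)}
    (hμsm : ∀ k, FiniteMoment p (μs k)) {pl : Measure (Fin K → Rd d)} (hpl : pl ∈ MCoupling μs) :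
    Continuous fun θ : sphere (0 : Rd d) 1 => ∫ x, spreadCost p (θ : Rd d) x ∂pl := by
  have hθ (θ : sphere (0 : Rd d) 1) : ‖(θ : Rd d)‖ ≤ 1 := (norm_eq_of_mem_sphere θ).le
  refine continuous_of_dominated (bound := fun x => 2 ^ p * ‖x‖ ^ p)
    (fun θ => (integrable_spreadCost_of_mem_mCoupling hp hμsm hpl (hθ θ)).aestronglyMeasurable)
    (fun θ => ae_of_all _ fun x => ?_)
    ((integrable_norm_rpow_of_mem_mCoupling hp hμsm hpl).const_mul (2 ^ p))
    (ae_of_all _ fun x => ?_)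
  · rw [norm_of_nonneg (spreadCost_nonneg p _ x)]
    exact spreadCost_le hp.le (hθ θ) x
  · exact continuous_subtype_val.spreadCost hp.le continuous_const

theorem upperSemicontinuous_smwTheta (hp : 0 < p) {μs : Fin K → Measure (Rd d)}
    (hμsm : ∀ k, FiniteMoment p (μs k)) : UpperSemicontinuous (SMWtheta p μs) := by
  simp_rw [funext (smwTheta_eq_iInf p μs)]
  exact upperSemicontinuous_ciInf (fun θ => bddBelow_range_integral_spreadCost p μs θ)
    fun pl => (continuous_integral_spreadCost hp hμsm pl.2).upperSemicontinuous

instance (d : ℕ) : IsFiniteMeasure (uniformSphere d) where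
  measure_univ_lt_top := by
    rw [uniformSphere, Measure.smul_apply, smul_eq_mul]
    exact (ENNReal.inv_mul_le_one _).trans_lt ENNReal.one_lt_top

theorem integrable_smwTheta (hp : 0 < p) (μs : Fin K → Measure (Rd d))
    [∀ k, IsProbabilityMeasure (μs k)] (hμsm : ∀ k, FiniteMoment p (μs k)) :
    Integrable (SMWtheta p μs) (uniformSphere d) := by
  refine .of_bound (upperSemicontinuous_smwTheta hp hμsm).measurable.aestronglyMeasurable
    (∫ x, 2 ^ p * ‖x‖ ^ p ∂(Measure.pi μs)) (ae_of_all _ fun θ => ?_)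
  rw [norm_of_nonneg (smwTheta_nonneg p μs θ)]
  refine (smwTheta_le_integral (pi_mem_mCoupling μs) θ).trans (integral_mono
    (integrable_spreadCost_of_mem_mCoupling hp hμsm (pi_mem_mCoupling μs)
      (norm_eq_of_mem_sphere θ).le)
    ((integrable_norm_rpow_of_mem_mCoupling hp hμsm (pi_mem_mCoupling μs)).const_mul _)
    fun x => spreadCost_le hp.le (norm_eq_of_mem_sphere θ).le x)

end SlicedCost

theorem smw_ge_max_sw_general (p : ℝ) (hp : 1 ≤ p) (d : ℕ)
    (K : ℕ) (μs : Fin K → Measure (Rd d))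
    (hμs : ∀ k, IsProbabilityMeasure (μs k)) (hμsm : ∀ k, FiniteMoment p (μs k)) :
    (⨆ i, ⨆ j, SWpp p (μs i) (μs j)) ≤ SMWpp p μs := by
  have hp₀ : 0 < p := zero_lt_one.trans_le hp
  have hSMW : 0 ≤ SMWpp p μs := integral_nonneg (smwTheta_nonneg p μs)
  refine Real.iSup_le (fun i => Real.iSup_le (fun j => ?_) hSMW) hSMW
  exact integral_mono_of_nonneg (ae_of_all _ fun θ => wpp_nonneg p _ _)
    (integrable_smwTheta hp₀ μs hμsm) (ae_of_all _ (wpp_le_smwTheta hp₀ μs hμsm · i j))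

/-- The sliced multi-marginal Wasserstein cost with the maximal ground metric
dominates the largest pairwise sliced Wasserstein cost among the marginals. -/
theorem smw_ge_max_sw (p : ℝ) (hp : 1 ≤ p) (d : ℕ) (hd : 1 ≤ d)
    (K : ℕ) (hK : 2 ≤ K) (μs : Fin K → Measure (Rd d))
    (hμs : ∀ k, IsProbabilityMeasure (μs k)) (hμsm : ∀ k, FiniteMoment p (μs k))
    (hmeas : ∀ i j, Measurable fun θ : sphere (0 : Rd d) 1 =>
      Wpp p (proj θ (μs i)) (proj θ (μs j)))
    (hint : ∀ i j, Integrable (fun θ => Wpp p (proj θ (μs i)) (proj θ (μs j)))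
      (uniformSphere d)) :
    (⨆ i, ⨆ j, SWpp p (μs i) (μs j)) ≤ SMWpp p μs :=
  smw_ge_max_sw_general p hp d K μs hμs hμsm
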